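/- Let $G_+$ be a commutative cancellative monoid with an action of $[0,1]$ satisfying the five axioms ($0.g=0$, $1.g=g$, $(s+t).g = s.g+t.g$ for $s+t\le 1$, $s.(g_1+g_2)=s.g_1+s.g_2$, $(st).g = s.(t.g)$). Extend the action to $\mathbb{R}_{\ge 0}$ via floor and fractional part. Then for all $s,t \ge 0$ and $g \in G_+$, $s.(t.g) = (st).g$. -/

import Mathlib

/-!
Write `s = ⌊s⌋₊ + s'` with `s' ∈ [0, 1)`. The extended action is additive in the scalar: adding
fractional parts either stays below `1` or carries, and a carry is absorbed using `1.g = g`.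
Hence `(n s).g = n • (s.g)`, and for `s' ∈ [0, 1)` distributivity and `(s't').g = s'.(t'.g)` give
`s'.(t.g) = (s't).g`, because `s'` times the fractional part of `t` stays below `1`.
Then `s.(t.g) = ⌊s⌋₊ • (t.g) + s'.(t.g) = (⌊s⌋₊ t).g + (s't).g = (st).g`.
-/

noncomputable def extendAction {G : Type*} [AddMonoid G] (act : ℝ → G → G) (t : ℝ) (g : G) : G :=
  ⌊t⌋₊ • g + act (t - ⌊t⌋₊) g

section

variable {G : Type*} [AddCommMonoid G] {act : ℝ → G → G} {s t : ℝ} {g : G}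

lemma act_add_act_of_one_le (h1 : ∀ g : G, act 1 g = g)
    (hadd : ∀ s t : ℝ, 0 ≤ s → 0 ≤ t → s + t ≤ 1 → ∀ g : G, act (s + t) g = act s g + act t g)
    (hs : s ≤ 1) (ht : t ≤ 1) (hst : 1 ≤ s + t) :
    act s g + act t g = act (s + t - 1) g + g := by
  have split_s := hadd (s + t - 1) (1 - t) (by linarith) (by linarith) (by linarith) g
  have split_one := hadd (1 - t) t (by linarith) (by linarith) (by linarith) g
  rw [show s + t - 1 + (1 - t) = s by ring] at split_s
  rw [show 1 - t + t = 1 by ring, h1] at split_one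
  rw [split_s, add_assoc, ← split_one]

lemma extendAction_of_lt_one (ht1 : t < 1) : extendAction act t g = act t g := by
  simp [extendAction, Nat.floor_eq_zero.2 ht1]

lemma extendAction_natCast_add (h0 : ∀ g : G, act 0 g = 0) (h1 : ∀ g : G, act 1 g = g)
    (n : ℕ) {r : ℝ} (hr : 0 ≤ r) (hr1 : r ≤ 1) :
    extendAction act (n + r) g = n • g + act r g := by
  rcases hr1.lt_or_eq with hr1 | rfl
  · have : ⌊(n : ℝ) + r⌋₊ = n := by
      rw [add_comm, Nat.floor_add_natCast hr, Nat.floor_eq_zero.2 hr1, zero_add]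
    simp [extendAction, this]
  · have : ⌊(n : ℝ) + 1⌋₊ = n + 1 := by exact_mod_cast Nat.floor_natCast (n + 1)
    simp [extendAction, this, h0, h1, succ_nsmul]

lemma extendAction_add (h0 : ∀ g : G, act 0 g = 0) (h1 : ∀ g : G, act 1 g = g)
    (hadd : ∀ s t : ℝ, 0 ≤ s → 0 ≤ t → s + t ≤ 1 → ∀ g : G, act (s + t) g = act s g + act t g)
    (hs : 0 ≤ s) (ht : 0 ≤ t) :
    extendAction act (s + t) g = extendAction act s g + extendAction act t g := by
  set a := ⌊s⌋₊
  set b := ⌊t⌋₊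
  set s' := s - a
  set t' := t - b
  have hs'0 : 0 ≤ s' := Nat.zero_le_self_sub_floor hs
  have ht'0 : 0 ≤ t' := Nat.zero_le_self_sub_floor ht
  have hs'1 : s' < 1 := Nat.self_sub_floor_lt_one s
  have ht'1 : t' < 1 := Nat.self_sub_floor_lt_one t
  change _ = a • g + act s' g + (b • g + act t' g)
  rcases le_or_gt (s' + t') 1 with hle | hgt
  · have : s + t = ((a + b : ℕ) : ℝ) + (s' + t') := by push_cast; ring
    rw [this, extendAction_natCast_add h0 h1 _ (by positivity) hle, hadd _ _ hs'0 ht'0 hle,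
      add_nsmul]
    abel
  · have : s + t = ((a + b + 1 : ℕ) : ℝ) + (s' + t' - 1) := by push_cast; ring
    rw [this, extendAction_natCast_add h0 h1 _ (by linarith) (by linarith),
      add_add_add_comm, act_add_act_of_one_le h1 hadd hs'1.le ht'1.le hgt.le, add_nsmul,
      add_nsmul, one_nsmul]
    abel

lemma extendAction_natCast_mul (h0 : ∀ g : G, act 0 g = 0) (h1 : ∀ g : G, act 1 g = g)
    (hadd : ∀ s t : ℝ, 0 ≤ s → 0 ≤ t → s + t ≤ 1 → ∀ g : G, act (s + t) g = act s g + act t g)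
    (n : ℕ) (hs : 0 ≤ s) : extendAction act (n * s) g = n • extendAction act s g := by
  induction n with
  | zero => simpa [extendAction_of_lt_one] using h0 g
  | succ k ih =>
    rw [Nat.cast_succ, add_one_mul, extendAction_add h0 h1 hadd (by positivity) hs, ih, succ_nsmul]

end

section

variable {G : Type*} [AddCancelCommMonoid G] {act : ℝ → G → G} {s t : ℝ} {g : G}

lemma act_nsmul (hdist : ∀ g₁ g₂ : G, act s (g₁ + g₂) = act s g₁ + act s g₂) (n : ℕ) (g : G) :
    act s (n • g) = n • act s g := by
  have act_zero : act s 0 = 0 := by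
    have h := hdist 0 0
    rw [add_zero] at h
    exact left_eq_add.mp h
  induction n with
  | zero => simpa using act_zero
  | succ k ih => rw [succ_nsmul, hdist, ih, succ_nsmul]

lemma act_extendAction (h0 : ∀ g : G, act 0 g = 0) (h1 : ∀ g : G, act 1 g = g)
    (hadd : ∀ s t : ℝ, 0 ≤ s → 0 ≤ t → s + t ≤ 1 → ∀ g : G, act (s + t) g = act s g + act t g)
    (hdist : ∀ s : ℝ, 0 ≤ s → s ≤ 1 → ∀ g₁ g₂ : G, act s (g₁ + g₂) = act s g₁ + act s g₂)
    (hmul : ∀ s t : ℝ, 0 ≤ s → s ≤ 1 → 0 ≤ t → t ≤ 1 → ∀ g : G,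
      act (s * t) g = act s (act t g))
    (hs : 0 ≤ s) (hs1 : s < 1) (ht : 0 ≤ t) :
    act s (extendAction act t g) = extendAction act (s * t) g := by
  set b := ⌊t⌋₊
  set t' := t - b
  have ht'0 : 0 ≤ t' := Nat.zero_le_self_sub_floor ht
  have ht'1 : t' < 1 := Nat.self_sub_floor_lt_one t
  have hst' : s * t' < 1 := by nlinarith
  have hst : s * t = b * s + s * t' := by ring
  rw [hst, extendAction_add h0 h1 hadd (by positivity) (by positivity),
    extendAction_natCast_mul h0 h1 hadd b hs, extendAction_of_lt_one hs1,
    extendAction_of_lt_one hst', extendAction, hdist s hs hs1.le,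
    act_nsmul (hdist s hs hs1.le), hmul s t' hs hs1.le ht'0 ht'1.le]

theorem extendAction_mul (h0 : ∀ g : G, act 0 g = 0) (h1 : ∀ g : G, act 1 g = g)
    (hadd : ∀ s t : ℝ, 0 ≤ s → 0 ≤ t → s + t ≤ 1 → ∀ g : G, act (s + t) g = act s g + act t g)
    (hdist : ∀ s : ℝ, 0 ≤ s → s ≤ 1 → ∀ g₁ g₂ : G, act s (g₁ + g₂) = act s g₁ + act s g₂)
    (hmul : ∀ s t : ℝ, 0 ≤ s → s ≤ 1 → 0 ≤ t → t ≤ 1 → ∀ g : G,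
      act (s * t) g = act s (act t g))
    (hs : 0 ≤ s) (ht : 0 ≤ t) :
    extendAction act s (extendAction act t g) = extendAction act (s * t) g := by
  set a := ⌊s⌋₊
  set s' := s - a
  have hs'0 : 0 ≤ s' := Nat.zero_le_self_sub_floor hs
  calc extendAction act s (extendAction act t g)
      = a • extendAction act t g + act s' (extendAction act t g) := rfl
    _ = extendAction act (a * t) g + extendAction act (s' * t) g := by
      rw [extendAction_natCast_mul h0 h1 hadd a ht,
        act_extendAction h0 h1 hadd hdist hmul hs'0 (Nat.self_sub_floor_lt_one s) ht]
    _ = extendAction act (s * t) g := by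
      rw [← extendAction_add h0 h1 hadd (by positivity) (mul_nonneg hs'0 ht), ← add_mul,
        add_sub_cancel]

end

/-- For a `[0,1]`-action on a commutative cancellative monoid satisfying
the five axioms, the extension to `ℝ≥0` is multiplicative in the scalar variable:
`s.(t.g) = (st).g` for all `s, t ≥ 0`. -/
theorem extended_action_mul_scalar {G : Type*} [AddCancelCommMonoid G] (act : ℝ → G → G)
    (h0 : ∀ g : G, act 0 g = 0)
    (h1 : ∀ g : G, act 1 g = g)
    (hadd : ∀ s t : ℝ, 0 ≤ s → 0 ≤ t → s + t ≤ 1 → ∀ g : G, act (s + t) g = act s g + act t g)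
    (hdist : ∀ s : ℝ, 0 ≤ s → s ≤ 1 → ∀ g₁ g₂ : G, act s (g₁ + g₂) = act s g₁ + act s g₂)
    (hmul : ∀ s t : ℝ, 0 ≤ s → s ≤ 1 → 0 ≤ t → t ≤ 1 → ∀ g : G,
      act (s * t) g = act s (act t g))
    (ext : ℝ → G → G)
    (hext : ∀ t : ℝ, 0 ≤ t → ∀ g : G, ext t g = ⌊t⌋₊ • g + act (t - (⌊t⌋₊ : ℝ)) g) :
    ∀ s t : ℝ, 0 ≤ s → 0 ≤ t → ∀ g : G, ext s (ext t g) = ext (s * t) g := by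
  have ext_eq : ∀ t, 0 ≤ t → ext t = extendAction act t := fun t ht ↦ funext (hext t ht)
  intro s t hs ht g
  rw [ext_eq s hs, ext_eq t ht, ext_eq _ (mul_nonneg hs ht)]
  exact extendAction_mul h0 h1 hadd hdist hmul hs ht
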